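/- Let F_i, i = 1,...,N, be continuous, strictly increasing (wherever in (0,1)) CDFs and B the set of Borel probability measures on ℝ^N with marginals F_i (a Fréchet/multi-marginal optimal transport feasible set). Suppose P* is a Nash equilibrium of the smooth game with payoffs ū_j(P) = u_j(P) + Σ_i ∫_{1−p_{j,i}}^1 F_{j,i}^{-1}(t)dt, and that the semi-parametric duality holds: sup_{μ∈B_j} E_{ξ∼μ}[max_i u_i + ξ_i] = max_{p∈Δ^N} ⟨p,u⟩ + Σ_i ∫_{1−p_i}^1 F_{j,i}^{-1}(t)dt with unique maximizer p* equal to the quantal response at the optimal μ*. Then P* is an SE-OB of the original game: for each j there exists μ*_j ∈ B_j achieving the supremum at u = (u_j(e_i; P*_{−j}))_i with p*_j equal to the induced choice probabilities. -/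
import Mathlib


open MeasureTheory Finset

/-- Left (generalized) quantile function. -/
noncomputable def leftQuantile (F : ℝ → ℝ) (t : ℝ) : ℝ := sInf {s : ℝ | t ≤ F s}

/-- Vertex `e_i` of the simplex. -/
def vtx {N : ℕ} (i : Fin N) : Fin N → ℝ := fun i' => if i' = i then 1 else 0

/-- Multilinear expected payoff of player `j`. -/
noncomputable def expPay {M N : ℕ} (ua : Fin M → (Fin M → Fin N) → ℝ)
    (P : Fin M → Fin N → ℝ) (j : Fin M) : ℝ :=
  ∑ a : Fin M → Fin N, (∏ l, P l (a l)) * ua j a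

/-- Marginal (Fréchet) belief set: Borel probability measures on `ℝ^N` whose `i`-th
marginal has CDF `F i`; the feasible set of a multi-marginal optimal transport problem. -/
def MBS {N : ℕ} (F : Fin N → ℝ → ℝ) : Set (Measure (Fin N → ℝ)) :=
  {μ | IsProbabilityMeasure μ ∧ ∀ i s, (μ {ξ | ξ i ≤ s}).toReal = F i s}

/-- Expected maximal perturbed payoff `E_{ξ∼μ}[maxᵢ uᵢ + ξᵢ]`. -/
noncomputable def eMax {N : ℕ} (hne : (Finset.univ : Finset (Fin N)).Nonempty)
    (μ : Measure (Fin N → ℝ)) (u : Fin N → ℝ) : ℝ :=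
  ∫ ξ, (Finset.univ.sup' hne fun i => u i + ξ i) ∂μ

/-- Quantal response `τ_i(μ; u) = Pr_{ξ∼μ}[i ∈ argmax_k u_k + ξ_k]`. -/
noncomputable def qr {N : ℕ} (μ : Measure (Fin N → ℝ)) (u : Fin N → ℝ) :
    Fin N → ℝ :=
  fun i => (μ {ξ | ∀ k, u k + ξ k ≤ u i + ξ i}).toReal

/-- Regularized linear objective `⟨p,u⟩ + ∑ᵢ ∫_{1−pᵢ}^1 Fᵢ⁻¹(t) dt`. -/
noncomputable def regObj {N : ℕ} (F : Fin N → ℝ → ℝ) (p u : Fin N → ℝ) : ℝ :=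
  (∑ i, p i * u i) + ∑ i, ∫ t in Set.Ioc (1 - p i) 1, leftQuantile (F i) t

/-- Every Nash equilibrium of the smooth game (payoffs regularized with the players'
risk-preference quantile integrals) is an SE-OB of the original game for the marginal
(Fréchet) belief sets, assuming the semi-parametric duality of
Natarajan–Song–Teo holds for each player. -/
theorem nash_smooth_is_SEOB (M N : ℕ)
    (hne : (Finset.univ : Finset (Fin N)).Nonempty)
    (ua : Fin M → (Fin M → Fin N) → ℝ) (hua : ∀ j a, ua j a ∈ Set.Icc (0 : ℝ) 1)
    (F : Fin M → Fin N → ℝ → ℝ)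
    (hF_cont : ∀ j i, Continuous (F j i)) (hF_mono : ∀ j i, Monotone (F j i))
    (hF_strict : ∀ j i, StrictMonoOn (F j i) {s | F j i s ∈ Set.Ioo (0 : ℝ) 1})
    -- semi-parametric duality: for each player `j` and payoff vector `u`, there is an
    -- optimistic belief `μ*` in the belief set attaining the supremum, whose value equals
    -- the maximum of the regularized objective, the quantal response at `μ*` being the
    -- unique maximizer.
    (hdual : ∀ (j : Fin M) (u : Fin N → ℝ), ∃ μstar ∈ MBS (F j),
      (∀ μ ∈ MBS (F j), eMax hne μ u ≤ eMax hne μstar u) ∧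
      qr μstar u ∈ stdSimplex ℝ (Fin N) ∧
      regObj (F j) (qr μstar u) u = eMax hne μstar u ∧
      (∀ p ∈ stdSimplex ℝ (Fin N), regObj (F j) p u ≤ eMax hne μstar u) ∧
      (∀ p ∈ stdSimplex ℝ (Fin N), regObj (F j) p u = eMax hne μstar u → p = qr μstar u))
    (Pstar : Fin M → Fin N → ℝ) (hP : ∀ j, Pstar j ∈ stdSimplex ℝ (Fin N))
    -- `P*` is a Nash equilibrium of the smooth game:
    (hnash : ∀ j, ∀ p ∈ stdSimplex ℝ (Fin N),
      regObj (F j) p (fun i => expPay ua (Function.update Pstar j (vtx i)) j) ≤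
        regObj (F j) (Pstar j)
          (fun i => expPay ua (Function.update Pstar j (vtx i)) j)) :
    -- SE-OB conclusion:
    ∀ j, ∃ μstar ∈ MBS (F j),
      Pstar j = qr μstar (fun i => expPay ua (Function.update Pstar j (vtx i)) j) ∧
      ∀ μ ∈ MBS (F j),
        eMax hne μ (fun i => expPay ua (Function.update Pstar j (vtx i)) j) ≤
          eMax hne μstar (fun i => expPay ua (Function.update Pstar j (vtx i)) j) := by
  intro j
  set u := fun i => expPay ua (Function.update Pstar j (vtx i)) j with hu
  obtain ⟨μstar, hμ, hsup, hqrS, hval, hub, huniq⟩ := hdual j u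
  refine ⟨μstar, hμ, ?_, hsup⟩
  have h1 : regObj (F j) (qr μstar u) u ≤ regObj (F j) (Pstar j) u := hnash j _ hqrS
  have h2 : regObj (F j) (Pstar j) u ≤ eMax hne μstar u := hub _ (hP j)
  exact huniq _ (hP j) (le_antisymm h2 (hval ▸ h1))
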